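/- Let n = p_1^{n_1} p_2^{n_2} with p_1, p_2 distinct primes and n_1 ≤ n_2. Then the clique number and chromatic number of the intersection graph of ideals of Z/nZ both equal n_2(n_1 + 1) − 1. -/

import Mathlib

/-- The intersection graph of ideals of a ring: vertices are the proper
non-trivial ideals, two distinct ideals are adjacent iff their intersection
is non-zero. -/
def interGraph (R : Type*) [CommRing R] : SimpleGraph {I : Ideal R // I ≠ ⊥ ∧ I ≠ ⊤} where
  Adj I J := I ≠ J ∧ I.1 ⊓ J.1 ≠ ⊥
  symm := by constructor; rintro I J ⟨h1, h2⟩; exact ⟨h1.symm, by rwa [inf_comm]⟩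
  loopless := by constructor; rintro I ⟨h, -⟩; exact h rfl

/-- Degree of a vertex. -/
noncomputable def vdeg {V : Type*} (G : SimpleGraph V) (v : V) : ℕ :=
  Nat.card {w // G.Adj v w}

/-- Maximum degree. -/
noncomputable def maxDeg {V : Type*} (G : SimpleGraph V) : ℕ := ⨆ v, vdeg G v

/-- Edge chromatic number (chromatic index), as the chromatic number of the line graph. -/
noncomputable def edgeChrom {V : Type*} (G : SimpleGraph V) : ℕ∞ :=
  (SimpleGraph.lineGraph G).chromaticNumber

/-- The intersection graph of non-empty proper subsets of `Fin m`. -/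
def subsetGraph (m : ℕ) : SimpleGraph {S : Finset (Fin m) // S ≠ ∅ ∧ S ≠ Finset.univ} where
  Adj S T := S ≠ T ∧ (S.1 ∩ T.1).Nonempty
  symm := by constructor; rintro S T ⟨h1, h2⟩; exact ⟨h1.symm, by rwa [Finset.inter_comm]⟩
  loopless := by constructor; rintro S ⟨h, -⟩; exact h rfl

/-!
By the Chinese remainder theorem and the fact that the ideals of `ℤ/p^kℤ` form the chain
`(p^k) ⊆ ⋯ ⊆ (p) ⊆ (1)`, the ideal lattice of `ℤ/nℤ` is the product of chains
`{0..n₁} × {0..n₂}` (the ideal `(p₁^(n₁-a) p₂^(n₂-b))` sits at `(a, b)`), with intersection the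
componentwise minimum. The `(n₁ + 1) n₂ - 1` vertices whose second coordinate is nonzero pairwise
intersect, and since `n₁ ≤ n₂` each remaining vertex `(a, 0)` can take the colour of `(0, a)`,
which it meets trivially.
-/

open SimpleGraph

theorem SimpleGraph.cliqueNum_eq_and_chromaticNumber_eq_of_isNClique_of_colorable {V : Type*}
    [Finite V] {G : SimpleGraph V} {s : Finset V} {k : ℕ} (hs : G.IsNClique k s)
    (hc : G.Colorable k) : G.cliqueNum = k ∧ G.chromaticNumber = k := by
  have hk : k ≤ G.cliqueNum := hs.card_eq ▸ hs.isClique.card_le_cliqueNum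
  have hχ : (G.cliqueNum : ℕ∞) ≤ G.chromaticNumber := G.cliqueNum_le_chromaticNumber
  have hkχ := hc.chromaticNumber_le
  refine ⟨le_antisymm (by exact_mod_cast hχ.trans hkχ) hk, le_antisymm hkχ ?_⟩
  exact (Nat.cast_le.mpr hk).trans hχ

theorem SimpleGraph.IsNClique.map_iso {V W : Type*} {G : SimpleGraph V} {H : SimpleGraph W}
    {k : ℕ} {s : Finset V} (hs : G.IsNClique k s) (e : G ≃g H) :
    H.IsNClique k (s.map e.toEquiv.toEmbedding) := by
  refine ⟨?_, by rw [Finset.card_map, hs.card_eq]⟩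
  rw [Finset.coe_map]
  rintro _ ⟨u, hu, rfl⟩ _ ⟨v, hv, rfl⟩ huv
  exact e.map_adj_iff.mpr (hs.isClique hu hv (ne_of_apply_ne _ huv))

def meetGraph (L : Type*) [SemilatticeInf L] [BoundedOrder L] :
    SimpleGraph {x : L // x ≠ ⊥ ∧ x ≠ ⊤} where
  Adj x y := x ≠ y ∧ x.1 ⊓ y.1 ≠ ⊥
  symm := ⟨fun _ _ ⟨hne, hinf⟩ => ⟨hne.symm, by rwa [inf_comm]⟩⟩
  loopless := ⟨fun _ ⟨hne, _⟩ => hne rfl⟩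

theorem interGraph_eq_meetGraph (R : Type*) [CommRing R] : interGraph R = meetGraph (Ideal R) :=
  rfl

def OrderIso.meetGraphCongr {L M : Type*} [SemilatticeInf L] [BoundedOrder L]
    [SemilatticeInf M] [BoundedOrder M] (e : L ≃o M) : meetGraph L ≃g meetGraph M where
  toEquiv := e.toEquiv.subtypeEquiv fun x => by simp
  map_rel_iff' {x y} := by
    simp only [meetGraph, Equiv.subtypeEquiv_apply, OrderIso.coe_toEquiv, ne_eq, Subtype.ext_iff,
      EquivLike.apply_eq_iff_eq, ← e.map_inf, map_eq_bot_iff]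

def OrderIso.prodCongr {α β γ δ : Type*} [Preorder α] [Preorder β] [Preorder γ] [Preorder δ]
    (e₁ : α ≃o β) (e₂ : γ ≃o δ) : α × γ ≃o β × δ where
  toEquiv := e₁.toEquiv.prodCongr e₂.toEquiv
  map_rel_iff' := by simp [Prod.le_def]

namespace ZMod

theorem natCast_dvd_natCast_iff {n a b : ℕ} (hb : b ∣ n) :
    (b : ZMod n) ∣ (a : ZMod n) ↔ b ∣ a := by
  refine ⟨fun ⟨x, hx⟩ => ?_, Nat.cast_dvd_cast⟩
  have hb_zero := congrArg (castHom hb (ZMod b)) hx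
  rw [map_natCast, map_mul, map_natCast, natCast_self, zero_mul] at hb_zero
  exact (natCast_eq_zero_iff a b).mp hb_zero

theorem exists_dvd_and_eq_span_natCast {n : ℕ} [NeZero n] (I : Ideal (ZMod n)) :
    ∃ d, d ∣ n ∧ I = Ideal.span {(d : ZMod n)} := by
  have : IsPrincipalIdealRing (ZMod n) :=
    IsPrincipalIdealRing.of_surjective (Int.castRingHom (ZMod n)) intCast_surjective
  obtain ⟨x, rfl⟩ := (IsPrincipalIdealRing.principal I).principal
  refine ⟨x.val.gcd n, Nat.gcd_dvd_right _ _, le_antisymm ?_ ?_⟩ <;>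
    rw [Ideal.submodule_span_eq, Ideal.span_singleton_le_span_singleton]
  · simpa only [natCast_zmod_val] using Nat.cast_dvd_cast (α := ZMod n) (Nat.gcd_dvd_left x.val n)
  · have bezout : ((x.val.gcd n : ℤ) : ZMod n) =
        ((x.val * x.val.gcdA n + n * x.val.gcdB n : ℤ) : ZMod n) := by
      rw [Nat.gcd_eq_gcd_ab]
    push_cast at bezout
    rw [natCast_self, zero_mul, add_zero, natCast_zmod_val] at bezout
    exact ⟨_, bezout⟩

noncomputable def idealOrderIsoFin {p : ℕ} (hp : p.Prime) (k : ℕ) :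
    Fin (k + 1) ≃o Ideal (ZMod (p ^ k)) := by
  have : NeZero (p ^ k) := ⟨pow_ne_zero k hp.ne_zero⟩
  refine OrderIso.ofSurjective
    (OrderEmbedding.ofMapLEIff (fun i => Ideal.span {((p ^ (i.rev : ℕ) : ℕ) : ZMod (p ^ k))})
      fun i j => ?_) ?_
  · rw [Ideal.span_singleton_le_span_singleton,
      natCast_dvd_natCast_iff (pow_dvd_pow p (Nat.le_of_lt_succ j.rev.isLt)),
      Nat.pow_dvd_pow_iff_le_right hp.one_lt, Fin.val_fin_le, Fin.rev_le_rev]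
  · intro I
    obtain ⟨d, hd, rfl⟩ := exists_dvd_and_eq_span_natCast I
    obtain ⟨e, he, rfl⟩ := (Nat.dvd_prime_pow hp).mp hd
    exact ⟨Fin.rev ⟨e, Nat.lt_succ_of_le he⟩, by simp [Nat.sub_sub_self he]⟩

noncomputable def idealOrderIsoFinProd {p q : ℕ} (hp : p.Prime) (hq : q.Prime) (hpq : p ≠ q)
    (a b : ℕ) : Ideal (ZMod (p ^ a * q ^ b)) ≃o Fin (a + 1) × Fin (b + 1) :=
  (chineseRemainder (((Nat.coprime_primes hp hq).mpr hpq).pow a b)).symm.idealComapOrderIso.trans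
    (Ideal.idealProdEquiv.trans ((idealOrderIsoFin hp a).prodCongr (idealOrderIsoFin hq b)).symm)

end ZMod

section FinProd

open Finset

variable {m n : ℕ}

def foldAxis (hmn : m ≤ n) (x : Fin (m + 1) × Fin (n + 1)) : Fin (m + 1) × Fin (n + 1) :=
  if x.2 = 0 then (0, Fin.castLE (by omega) x.1) else x

theorem foldAxis_snd_ne_bot (hmn : m ≤ n) {x : Fin (m + 1) × Fin (n + 1)} (hx : x ≠ ⊥) :
    (foldAxis hmn x).2 ≠ ⊥ := by
  unfold foldAxis
  simp only [ne_eq, Prod.ext_iff, Prod.fst_bot, Prod.snd_bot, bot_eq_zero] at hx ⊢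
  split_ifs <;> simp only [Fin.ext_iff, Fin.val_zero, Fin.val_castLE] at * <;> omega

theorem foldAxis_ne_top (hmn : m ≤ n) {x : Fin (m + 1) × Fin (n + 1)} (hx : x ≠ ⊤) :
    foldAxis hmn x ≠ ⊤ := by
  unfold foldAxis
  simp only [ne_eq, Prod.ext_iff, Prod.fst_top, Prod.snd_top, Fin.top_eq_last] at hx ⊢
  split_ifs <;> simp only [Fin.ext_iff, Fin.val_zero, Fin.val_castLE, Fin.val_last] at * <;> omega

theorem inf_eq_bot_of_foldAxis_eq (hmn : m ≤ n) {x y : Fin (m + 1) × Fin (n + 1)}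
    (hxy : x ≠ y) (h : foldAxis hmn x = foldAxis hmn y) : x ⊓ y = ⊥ := by
  unfold foldAxis at h
  simp only [ne_eq, Prod.ext_iff, Prod.fst_bot, Prod.snd_bot, bot_eq_zero, Prod.fst_inf,
    Prod.snd_inf] at hxy h ⊢
  split_ifs at h <;> simp only [Fin.ext_iff, Fin.val_zero, Fin.val_castLE, Fin.coe_min] at * <;>
    omega

theorem card_meetGraph_vertex_snd_ne_bot :
    Fintype.card {v : {x : Fin (m + 1) × Fin (n + 1) // x ≠ ⊥ ∧ x ≠ ⊤} // v.1.2 ≠ ⊥} =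
      n * (m + 1) - 1 := by
  have hmem (x : Fin (m + 1) × Fin (n + 1)) :
      (x ≠ ⊥ ∧ x ≠ ⊤) ∧ x.2 ≠ ⊥ ↔ x ∈ (univ ×ˢ univ.erase ⊥).erase ⊤ := by
    simp only [mem_erase, mem_product, mem_univ, true_and, and_true]
    exact ⟨fun ⟨⟨_, htop⟩, hsnd⟩ => ⟨htop, hsnd⟩,
      fun ⟨htop, hsnd⟩ => ⟨⟨fun h => hsnd (h ▸ rfl), htop⟩, hsnd⟩⟩
  rw [Fintype.card_congr ((Equiv.subtypeSubtypeEquivSubtypeInter _ _).trans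
    (Equiv.subtypeEquivRight hmem)), Fintype.card_coe]
  rcases n with _ | n
  · simp [bot_eq_zero]
  rw [card_erase_of_mem (by simp), card_product, card_erase_of_mem (mem_univ _)]
  simp [mul_comm]

theorem meetGraph_isNClique_snd_ne_bot :
    (meetGraph (Fin (m + 1) × Fin (n + 1))).IsNClique (n * (m + 1) - 1)
      (univ.filter fun v => v.1.2 ≠ ⊥) := by
  refine ⟨fun u hu v hv huv => ⟨huv, fun h => ?_⟩, ?_⟩
  · have hsnd : min u.1.2 v.1.2 = ⊥ := congrArg Prod.snd h
    simp only [coe_filter, mem_univ, true_and, Set.mem_ofPred_eq] at hu hv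
    exact (min_eq_bot.mp hsnd).elim hu hv
  · rw [← Fintype.card_subtype, card_meetGraph_vertex_snd_ne_bot]

def foldColoring (hmn : m ≤ n) : (meetGraph (Fin (m + 1) × Fin (n + 1))).Coloring
    {v : {x : Fin (m + 1) × Fin (n + 1) // x ≠ ⊥ ∧ x ≠ ⊤} // v.1.2 ≠ ⊥} :=
  Coloring.mk
    (fun v => ⟨⟨foldAxis hmn v.1, fun h => foldAxis_snd_ne_bot hmn v.2.1 (congrArg Prod.snd h),
      foldAxis_ne_top hmn v.2.2⟩, foldAxis_snd_ne_bot hmn v.2.1⟩)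
    fun ⟨huv, hinf⟩ heq =>
      hinf (inf_eq_bot_of_foldAxis_eq hmn (Subtype.coe_ne_coe.mpr huv) (by simpa using heq))

theorem meetGraph_colorable (hmn : m ≤ n) :
    (meetGraph (Fin (m + 1) × Fin (n + 1))).Colorable (n * (m + 1) - 1) :=
  card_meetGraph_vertex_snd_ne_bot ▸ (foldColoring hmn).colorable

end FinProd

theorem stmt4_general (p₁ p₂ n₁ n₂ : ℕ) (hp₁ : p₁.Prime) (hp₂ : p₂.Prime) (hne : p₁ ≠ p₂)
    (h₁₂ : n₁ ≤ n₂) :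
    (interGraph (ZMod (p₁ ^ n₁ * p₂ ^ n₂))).cliqueNum = n₂ * (n₁ + 1) - 1 ∧
    (interGraph (ZMod (p₁ ^ n₁ * p₂ ^ n₂))).chromaticNumber = ((n₂ * (n₁ + 1) - 1 : ℕ) : ℕ∞) := by
  rw [interGraph_eq_meetGraph]
  let e := (ZMod.idealOrderIsoFinProd hp₁ hp₂ hne n₁ n₂).meetGraphCongr
  have : Finite {I : Ideal (ZMod (p₁ ^ n₁ * p₂ ^ n₂)) // I ≠ ⊥ ∧ I ≠ ⊤} := .of_equiv _ e.symm.toEquiv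
  exact cliqueNum_eq_and_chromaticNumber_eq_of_isNClique_of_colorable
    (meetGraph_isNClique_snd_ne_bot.map_iso e.symm) ((meetGraph_colorable h₁₂).of_hom e)

theorem stmt4 (p₁ p₂ n₁ n₂ : ℕ) (hp₁ : p₁.Prime) (hp₂ : p₂.Prime) (hne : p₁ ≠ p₂)
    (h₁ : 1 ≤ n₁) (h₁₂ : n₁ ≤ n₂) :
    (interGraph (ZMod (p₁ ^ n₁ * p₂ ^ n₂))).cliqueNum = n₂ * (n₁ + 1) - 1 ∧
    (interGraph (ZMod (p₁ ^ n₁ * p₂ ^ n₂))).chromaticNumber = ((n₂ * (n₁ + 1) - 1 : ℕ) : ℕ∞) :=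
  stmt4_general p₁ p₂ n₁ n₂ hp₁ hp₂ hne h₁₂
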